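/- arXiv:1803.01615 — 3 statements merged into one kernel-verified Lean document; each statement's English description precedes it below -/
import Mathlib

section
/- Gauss equation in conformal coordinates: for a conformal minimal immersion f : ℂ → S^n one has the pointwise identity 4 ρ_{z z̄} = 4 e^{−2ρ} ⟨Ω, Ω̄⟩ − e^{2ρ}; equivalently, since the Gauss curvature of the metric e^{2ρ}|dz|² is K = −4 e^{−2ρ} ρ_{z z̄}, this is the Gauss equation −K + 1 = 4 e^{−4ρ} |Ω|². -/
open Complex

noncomputable section

/-- Wirtinger derivative `∂_z` of a map `ℂ → ℂ`. -/
def wirtZ (g : ℂ → ℂ) (z : ℂ) : ℂ :=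
  (1 / 2 : ℂ) * (fderiv ℝ g z 1 - Complex.I * fderiv ℝ g z Complex.I)

/-- Wirtinger derivative `∂_z̄` of a map `ℂ → ℂ`. -/
def wirtZbar (g : ℂ → ℂ) (z : ℂ) : ℂ :=
  (1 / 2 : ℂ) * (fderiv ℝ g z 1 + Complex.I * fderiv ℝ g z Complex.I)

/-- Componentwise `∂_z` for vector-valued maps. -/
def WZ {m : ℕ} (g : ℂ → Fin m → ℂ) : ℂ → Fin m → ℂ :=
  fun z i => wirtZ (fun w => g w i) z

/-- Componentwise `∂_z̄` for vector-valued maps. -/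
def WZb {m : ℕ} (g : ℂ → Fin m → ℂ) : ℂ → Fin m → ℂ :=
  fun z i => wirtZbar (fun w => g w i) z

/-- Complex-bilinear (non-conjugating) pairing. -/
def pairC {m : ℕ} (u v : Fin m → ℂ) : ℂ := ∑ i, u i * v i

/-- Componentwise complex conjugation. -/
def conjV {m : ℕ} (u : Fin m → ℂ) : Fin m → ℂ := fun i => (starRingEnd ℂ) (u i)

/-- Complexification of a real vector. -/
def cV {m : ℕ} (u : Fin m → ℝ) : Fin m → ℂ := fun i => (u i : ℂ)

/-- Complexification of a real-vector-valued map. -/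
def Fc {m : ℕ} (f : ℂ → Fin m → ℝ) : ℂ → Fin m → ℂ := fun z => cV (f z)

/-- `∂_z` of (the complexification of) a real-valued function. -/
def dZ (ρ : ℂ → ℝ) (z : ℂ) : ℂ := wirtZ (fun w => ((ρ w : ℝ) : ℂ)) z

/-- `f : ℂ → S^n ⊂ ℝ^{n+1}` is a conformal minimal immersion with conformal factor `ρ`:
`⟨f_z, f_z⟩ = 0`, `⟨f_z, f̄_z⟩ = (1/2) e^{2ρ}`, and `f_{z z̄} = −(1/2) e^{2ρ} f`. -/
def IsConfMinImm {m : ℕ} (f : ℂ → Fin m → ℝ) (ρ : ℂ → ℝ) : Prop :=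
  ContDiff ℝ (⊤ : ℕ∞) f ∧ ContDiff ℝ (⊤ : ℕ∞) ρ ∧
  (∀ z, ∑ i, (f z i) ^ 2 = 1) ∧
  (∀ z, pairC (WZ (Fc f) z) (WZ (Fc f) z) = 0) ∧
  (∀ z, pairC (WZ (Fc f) z) (conjV (WZ (Fc f) z)) = (1 / 2 : ℂ) * (Real.exp (2 * ρ z) : ℂ)) ∧
  (∀ z i, WZb (WZ (Fc f)) z i = -(1 / 2 : ℂ) * (Real.exp (2 * ρ z) : ℂ) * Fc f z i)

/-- The Hopf field `Ω = f_{zz} − 2 ρ_z f_z`. -/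
def Hopf {m : ℕ} (f : ℂ → Fin m → ℝ) (ρ : ℂ → ℝ) : ℂ → Fin m → ℂ :=
  fun z i => WZ (WZ (Fc f)) z i - 2 * dZ ρ z * WZ (Fc f) z i

/-- Real part `Ω₁` of the Hopf field, viewed in `ℂ^{n+1}`. -/
def HopfRe {m : ℕ} (f : ℂ → Fin m → ℝ) (ρ : ℂ → ℝ) : ℂ → Fin m → ℂ :=
  fun z i => ((Hopf f ρ z i).re : ℂ)

/-- Imaginary part `Ω₂` of the Hopf field, viewed in `ℂ^{n+1}`. -/
def HopfIm {m : ℕ} (f : ℂ → Fin m → ℝ) (ρ : ℂ → ℝ) : ℂ → Fin m → ℂ :=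
  fun z i => ((Hopf f ρ z i).im : ℂ)

/-- Normal projection `E^⊥` of a constant vector `E ∈ ℝ^{n+1}`. -/
def Eperp {m : ℕ} (f : ℂ → Fin m → ℝ) (ρ : ℂ → ℝ) (E : Fin m → ℝ) : ℂ → Fin m → ℂ :=
  fun z i => (E i : ℂ) - pairC (cV E) (Fc f z) * Fc f z i
    - 2 * (Real.exp (-2 * ρ z) : ℂ) * pairC (cV E) (WZ (Fc f) z) * WZb (Fc f) z i
    - 2 * (Real.exp (-2 * ρ z) : ℂ) * pairC (cV E) (WZb (Fc f) z) * WZ (Fc f) z i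

/-- `ψ` is a normal field along `f`. -/
def IsNormalField {m : ℕ} (f : ℂ → Fin m → ℝ) (ψ : ℂ → Fin m → ℂ) : Prop :=
  ∀ z, pairC (ψ z) (Fc f z) = 0 ∧ pairC (ψ z) (WZ (Fc f) z) = 0 ∧
    pairC (ψ z) (WZb (Fc f) z) = 0

/-- Normal covariant derivative `N_z ψ = ψ_z + 2 e^{−2ρ} ⟨ψ, Ω⟩ f_z̄`. -/
def NZ {m : ℕ} (f : ℂ → Fin m → ℝ) (ρ : ℂ → ℝ) (ψ : ℂ → Fin m → ℂ) : ℂ → Fin m → ℂ :=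
  fun z i => WZ ψ z i
    + 2 * (Real.exp (-2 * ρ z) : ℂ) * pairC (ψ z) (Hopf f ρ z) * WZb (Fc f) z i

/-- Normal covariant derivative `N_z̄ ψ = ψ_z̄ + 2 e^{−2ρ} ⟨ψ, Ω̄⟩ f_z`. -/
def NZb {m : ℕ} (f : ℂ → Fin m → ℝ) (ρ : ℂ → ℝ) (ψ : ℂ → Fin m → ℂ) : ℂ → Fin m → ℂ :=
  fun z i => WZb ψ z i
    + 2 * (Real.exp (-2 * ρ z) : ℂ) * pairC (ψ z) (conjV (Hopf f ρ z)) * WZ (Fc f) z i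

/-- Normal Laplacian `Δ^⊥ ψ = 2 e^{−2ρ} (N_z̄ (N_z ψ) + N_z (N_z̄ ψ))`. -/
def LapPerp {m : ℕ} (f : ℂ → Fin m → ℝ) (ρ : ℂ → ℝ) (ψ : ℂ → Fin m → ℂ) : ℂ → Fin m → ℂ :=
  fun z i => 2 * (Real.exp (-2 * ρ z) : ℂ) * (NZb f ρ (NZ f ρ ψ) z i + NZ f ρ (NZb f ρ ψ) z i)

/-- Jacobi operator `𝓛 ψ = Δ^⊥ ψ + 2 ψ + 4 e^{−4ρ} (⟨ψ, Ω⟩ Ω̄ + ⟨ψ, Ω̄⟩ Ω)`. -/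
def Jacobi {m : ℕ} (f : ℂ → Fin m → ℝ) (ρ : ℂ → ℝ) (ψ : ℂ → Fin m → ℂ) : ℂ → Fin m → ℂ :=
  fun z i => LapPerp f ρ ψ z i + 2 * ψ z i
    + 4 * (Real.exp (-4 * ρ z) : ℂ) *
      (pairC (ψ z) (Hopf f ρ z) * conjV (Hopf f ρ z) i
        + pairC (ψ z) (conjV (Hopf f ρ z)) * Hopf f ρ z i)

/-- The S⁴ adapted frame setup: `⟨Ω, Ω⟩ ≡ 1`, `Ω₁ = cosh θ · ψ₃`, `Ω₂ = sinh θ · ψ₄`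
with `ψ₃, ψ₄` orthonormal normal fields. -/
def S4Frame (f : ℂ → Fin 5 → ℝ) (ρ : ℂ → ℝ) (ψ₃ ψ₄ : ℂ → Fin 5 → ℝ) (θ : ℂ → ℝ) : Prop :=
  ContDiff ℝ (⊤ : ℕ∞) ψ₃ ∧ ContDiff ℝ (⊤ : ℕ∞) ψ₄ ∧ ContDiff ℝ (⊤ : ℕ∞) θ ∧
  IsNormalField f (Fc ψ₃) ∧ IsNormalField f (Fc ψ₄) ∧
  (∀ z, ∑ i, (ψ₃ z i) ^ 2 = 1) ∧ (∀ z, ∑ i, (ψ₄ z i) ^ 2 = 1) ∧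
  (∀ z, ∑ i, ψ₃ z i * ψ₄ z i = 0) ∧
  (∀ z, pairC (Hopf f ρ z) (Hopf f ρ z) = 1) ∧
  (∀ z i, (Hopf f ρ z i).re = Real.cosh (θ z) * ψ₃ z i) ∧
  (∀ z i, (Hopf f ρ z i).im = Real.sinh (θ z) * ψ₄ z i)

namespace Wirt

lemma contDiff_fderiv_apply {g : ℂ → ℂ} (hg : ContDiff ℝ (⊤ : ℕ∞) g) (v : ℂ) :
    ContDiff ℝ (⊤ : ℕ∞) fun z => fderiv ℝ g z v :=
  (ContinuousLinearMap.apply ℝ ℂ v).contDiff.comp (hg.fderiv_right (by simp))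

lemma contDiff_wirtZ {g : ℂ → ℂ} (hg : ContDiff ℝ (⊤ : ℕ∞) g) : ContDiff ℝ (⊤ : ℕ∞) (wirtZ g) := by
  unfold wirtZ
  exact contDiff_const.mul ((contDiff_fderiv_apply hg 1).sub
    (contDiff_const.mul (contDiff_fderiv_apply hg Complex.I)))

lemma wirtZ_mul {g h : ℂ → ℂ} {z : ℂ} (hg : DifferentiableAt ℝ g z)
    (hh : DifferentiableAt ℝ h z) :
    wirtZ (fun w => g w * h w) z = wirtZ g z * h z + g z * wirtZ h z := by
  unfold wirtZ
  rw [fderiv_fun_mul hg hh]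
  simp only [ContinuousLinearMap.add_apply, ContinuousLinearMap.smul_apply, smul_eq_mul]
  ring

lemma wirtZbar_mul {g h : ℂ → ℂ} {z : ℂ} (hg : DifferentiableAt ℝ g z)
    (hh : DifferentiableAt ℝ h z) :
    wirtZbar (fun w => g w * h w) z = wirtZbar g z * h z + g z * wirtZbar h z := by
  unfold wirtZbar
  rw [fderiv_fun_mul hg hh]
  simp only [ContinuousLinearMap.add_apply, ContinuousLinearMap.smul_apply, smul_eq_mul]
  ring

lemma fderiv_conj_apply (g : ℂ → ℂ) (z v : ℂ) :
    fderiv ℝ (fun w => (starRingEnd ℂ) (g w)) z v = (starRingEnd ℂ) (fderiv ℝ g z v) := by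
  simp only [starRingEnd_apply]
  rw [fderiv_star]
  simp

lemma wirtZ_conj (g : ℂ → ℂ) (z : ℂ) :
    wirtZ (fun w => (starRingEnd ℂ) (g w)) z = (starRingEnd ℂ) (wirtZbar g z) := by
  unfold wirtZ wirtZbar
  rw [fderiv_conj_apply, fderiv_conj_apply]
  simp only [map_mul, map_add, map_sub, map_div₀, map_one, map_ofNat, Complex.conj_I]
  ring

lemma wirtZbar_conj (g : ℂ → ℂ) (z : ℂ) :
    wirtZbar (fun w => (starRingEnd ℂ) (g w)) z = (starRingEnd ℂ) (wirtZ g z) := by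
  unfold wirtZ wirtZbar
  rw [fderiv_conj_apply, fderiv_conj_apply]
  simp only [map_mul, map_add, map_sub, map_div₀, map_one, map_ofNat, Complex.conj_I]
  ring

lemma wirtZ_sum {ι : Type*} (s : Finset ι) {G : ι → ℂ → ℂ} {z : ℂ}
    (h : ∀ i ∈ s, DifferentiableAt ℝ (G i) z) :
    wirtZ (fun w => ∑ i ∈ s, G i w) z = ∑ i ∈ s, wirtZ (G i) z := by
  unfold wirtZ
  rw [fderiv_fun_sum h]
  simp only [ContinuousLinearMap.sum_apply]
  simp only [Finset.mul_sum]
  rw [← Finset.sum_sub_distrib, Finset.mul_sum]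

lemma wirtZbar_sum {ι : Type*} (s : Finset ι) {G : ι → ℂ → ℂ} {z : ℂ}
    (h : ∀ i ∈ s, DifferentiableAt ℝ (G i) z) :
    wirtZbar (fun w => ∑ i ∈ s, G i w) z = ∑ i ∈ s, wirtZbar (G i) z := by
  unfold wirtZbar
  rw [fderiv_fun_sum h]
  simp only [ContinuousLinearMap.sum_apply]
  simp only [Finset.mul_sum]
  rw [← Finset.sum_add_distrib, Finset.mul_sum]

lemma wirtZ_const (c : ℂ) (z : ℂ) : wirtZ (fun _ => c) z = 0 := by
  unfold wirtZ; simp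

lemma wirtZ_const_mul (c : ℂ) {g : ℂ → ℂ} {z : ℂ} (hg : DifferentiableAt ℝ g z) :
    wirtZ (fun w => c * g w) z = c * wirtZ g z := by
  unfold wirtZ
  rw [fderiv_const_mul hg]
  simp only [ContinuousLinearMap.smul_apply, smul_eq_mul]
  ring

lemma fderiv_ofReal_apply {ρ : ℂ → ℝ} {z : ℂ} (hρ : DifferentiableAt ℝ ρ z) (v : ℂ) :
    fderiv ℝ (fun w => ((ρ w : ℝ) : ℂ)) z v = ((fderiv ℝ ρ z v : ℝ) : ℂ) := by
  have h : HasFDerivAt (fun w => ((ρ w : ℝ) : ℂ))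
      (Complex.ofRealCLM.comp (fderiv ℝ ρ z)) z :=
    Complex.ofRealCLM.hasFDerivAt.comp z hρ.hasFDerivAt
  rw [h.fderiv]
  rfl

lemma conj_fderiv_ofReal {ρ : ℂ → ℝ} {z : ℂ} (hρ : DifferentiableAt ℝ ρ z) (v : ℂ) :
    (starRingEnd ℂ) (fderiv ℝ (fun w => ((ρ w : ℝ) : ℂ)) z v)
      = fderiv ℝ (fun w => ((ρ w : ℝ) : ℂ)) z v := by
  rw [fderiv_ofReal_apply hρ, Complex.conj_ofReal]

/-- `∂_z̄` of a real-valued (complexified) function is the conjugate of `∂_z`. -/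
lemma wirtZbar_ofReal {ρ : ℂ → ℝ} {z : ℂ} (hρ : DifferentiableAt ℝ ρ z) :
    wirtZbar (fun w => ((ρ w : ℝ) : ℂ)) z
      = (starRingEnd ℂ) (wirtZ (fun w => ((ρ w : ℝ) : ℂ)) z) := by
  unfold wirtZ wirtZbar
  simp only [map_mul, map_sub, map_div₀, map_one, map_ofNat, Complex.conj_I,
    conj_fderiv_ofReal hρ]
  ring

lemma contDiff_ofReal_comp {ρ : ℂ → ℝ} (hρ : ContDiff ℝ (⊤ : ℕ∞) ρ) :
    ContDiff ℝ (⊤ : ℕ∞) (fun w => ((ρ w : ℝ) : ℂ)) :=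
  Complex.ofRealCLM.contDiff.comp hρ

lemma fderiv_expC_apply {ρ : ℂ → ℝ} {z : ℂ} (hρ : DifferentiableAt ℝ ρ z) (v : ℂ) :
    fderiv ℝ (fun w => ((Real.exp (2 * ρ w) : ℝ) : ℂ)) z v
      = 2 * ((fderiv ℝ ρ z v : ℝ) : ℂ) * ((Real.exp (2 * ρ z) : ℝ) : ℂ) := by
  have h1 : HasFDerivAt (fun w => 2 * ρ w) ((2 : ℝ) • fderiv ℝ ρ z) z := by
    simpa using hρ.hasFDerivAt.const_mul (2 : ℝ)
  have h2 : HasDerivAt Real.exp (Real.exp (2 * ρ z)) (2 * ρ z) := Real.hasDerivAt_exp _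
  have h3 := h2.comp_hasFDerivAt z h1
  have h4 := Complex.ofRealCLM.hasFDerivAt.comp z h3
  have h5 : HasFDerivAt (fun w => ((Real.exp (2 * ρ w) : ℝ) : ℂ))
      (Complex.ofRealCLM.comp (Real.exp (2 * ρ z) • (2 : ℝ) • fderiv ℝ ρ z)) z := h4
  rw [h5.fderiv]
  simp only [ContinuousLinearMap.coe_comp', Function.comp_apply,
    ContinuousLinearMap.smul_apply, smul_eq_mul, Complex.ofRealCLM_apply,
    Complex.ofReal_mul, Complex.ofReal_ofNat]
  ring

lemma wirtZ_expC {ρ : ℂ → ℝ} {z : ℂ} (hρ : DifferentiableAt ℝ ρ z) :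
    wirtZ (fun w => ((Real.exp (2 * ρ w) : ℝ) : ℂ)) z
      = 2 * wirtZ (fun w => ((ρ w : ℝ) : ℂ)) z * ((Real.exp (2 * ρ z) : ℝ) : ℂ) := by
  unfold wirtZ
  rw [fderiv_expC_apply hρ, fderiv_expC_apply hρ, fderiv_ofReal_apply hρ,
    fderiv_ofReal_apply hρ]
  ring

lemma wirtZbar_expC {ρ : ℂ → ℝ} {z : ℂ} (hρ : DifferentiableAt ℝ ρ z) :
    wirtZbar (fun w => ((Real.exp (2 * ρ w) : ℝ) : ℂ)) z
      = 2 * wirtZbar (fun w => ((ρ w : ℝ) : ℂ)) z * ((Real.exp (2 * ρ z) : ℝ) : ℂ) := by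
  unfold wirtZbar
  rw [fderiv_expC_apply hρ, fderiv_expC_apply hρ, fderiv_ofReal_apply hρ,
    fderiv_ofReal_apply hρ]
  ring

lemma contDiff_expC {ρ : ℂ → ℝ} (hρ : ContDiff ℝ (⊤ : ℕ∞) ρ) :
    ContDiff ℝ (⊤ : ℕ∞) (fun w => ((Real.exp (2 * ρ w) : ℝ) : ℂ)) :=
  Complex.ofRealCLM.contDiff.comp (Real.contDiff_exp.comp (contDiff_const.mul hρ))

lemma fderiv_fderiv_apply {g : ℂ → ℂ} (hg : ContDiff ℝ (⊤ : ℕ∞) g) (z u v : ℂ) :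
    fderiv ℝ (fun w => fderiv ℝ g w v) z u = fderiv ℝ (fderiv ℝ g) z u v := by
  have hd : DifferentiableAt ℝ (fderiv ℝ g) z :=
    ((hg.fderiv_right (m := 1) (by exact WithTop.coe_le_coe.mpr le_top)).differentiable one_ne_zero) z
  have h := hd.hasFDerivAt.clm_apply (hasFDerivAt_const v z)
  rw [h.fderiv]
  simp

/-- Mixed Wirtinger derivatives commute for smooth functions. -/
lemma wirt_comm {g : ℂ → ℂ} (hg : ContDiff ℝ (⊤ : ℕ∞) g) (z : ℂ) :
    wirtZbar (wirtZ g) z = wirtZ (wirtZbar g) z := by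
  have hsym : ∀ v w : ℂ, fderiv ℝ (fderiv ℝ g) z v w = fderiv ℝ (fderiv ℝ g) z w v :=
    hg.contDiffAt.isSymmSndFDerivAt (by rw [minSmoothness_of_isRCLikeNormedField]; exact WithTop.coe_le_coe.mpr le_top)
  have hA : ∀ v : ℂ, DifferentiableAt ℝ (fun w => fderiv ℝ g w v) z := fun v =>
    ((contDiff_fderiv_apply hg v).differentiable (by simp)) z
  have key : ∀ u : ℂ, fderiv ℝ (wirtZ g) z u
      = (1 / 2 : ℂ) * (fderiv ℝ (fderiv ℝ g) z u 1
        - Complex.I * fderiv ℝ (fderiv ℝ g) z u Complex.I) := by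
    intro u
    have : wirtZ g = fun w => (1 / 2 : ℂ) * ((fun w => fderiv ℝ g w 1) w
        - (fun w => Complex.I * fderiv ℝ g w Complex.I) w) := rfl
    rw [this, fderiv_const_mul (a := fun w => (fun w => fderiv ℝ g w 1) w
          - (fun w => Complex.I * fderiv ℝ g w Complex.I) w)
        ((hA 1).sub ((hA Complex.I).const_mul _)),
      fderiv_fun_sub (hA 1) ((hA Complex.I).const_mul _),
      fderiv_const_mul (hA Complex.I)]
    simp only [ContinuousLinearMap.smul_apply, ContinuousLinearMap.coe_sub',
      Pi.sub_apply, smul_eq_mul, fderiv_fderiv_apply hg]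
  have keyb : ∀ u : ℂ, fderiv ℝ (wirtZbar g) z u
      = (1 / 2 : ℂ) * (fderiv ℝ (fderiv ℝ g) z u 1
        + Complex.I * fderiv ℝ (fderiv ℝ g) z u Complex.I) := by
    intro u
    have : wirtZbar g = fun w => (1 / 2 : ℂ) * ((fun w => fderiv ℝ g w 1) w
        + (fun w => Complex.I * fderiv ℝ g w Complex.I) w) := rfl
    rw [this, fderiv_const_mul (a := fun w => (fun w => fderiv ℝ g w 1) w
          + (fun w => Complex.I * fderiv ℝ g w Complex.I) w)
        ((hA 1).add ((hA Complex.I).const_mul _)),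
      fderiv_fun_add (hA 1) ((hA Complex.I).const_mul _),
      fderiv_const_mul (hA Complex.I)]
    simp only [ContinuousLinearMap.smul_apply, ContinuousLinearMap.coe_add',
      Pi.add_apply, smul_eq_mul, fderiv_fderiv_apply hg]
  have e1 : wirtZbar (wirtZ g) z = (1 / 2 : ℂ) * (fderiv ℝ (wirtZ g) z 1
      + Complex.I * fderiv ℝ (wirtZ g) z Complex.I) := rfl
  have e2 : wirtZ (wirtZbar g) z = (1 / 2 : ℂ) * (fderiv ℝ (wirtZbar g) z 1
      - Complex.I * fderiv ℝ (wirtZbar g) z Complex.I) := rfl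
  rw [e1, e2, key 1, key Complex.I, keyb 1, keyb Complex.I, hsym 1 Complex.I]
  ring

end Wirt

namespace GaussAux

open Wirt

variable {m : ℕ}

/-- Component of the complexified immersion. -/
def Fi (f : ℂ → Fin m → ℝ) (i : Fin m) : ℂ → ℂ := fun w => ((f w i : ℝ) : ℂ)

/-- Complexified conformal factor `e^{2ρ}`. -/
def Ecf (ρ : ℂ → ℝ) : ℂ → ℂ := fun w => ((Real.exp (2 * ρ w) : ℝ) : ℂ)

lemma contDiff_Fi {f : ℂ → Fin m → ℝ} (hf1 : ContDiff ℝ (⊤ : ℕ∞) f) (i : Fin m) :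
    ContDiff ℝ (⊤ : ℕ∞) (Fi f i) :=
  Wirt.contDiff_ofReal_comp (ρ := fun w => f w i)
    (by exact (ContinuousLinearMap.proj i).contDiff.comp hf1)

lemma conj_Fi (f : ℂ → Fin m → ℝ) (i : Fin m) (w : ℂ) :
    (starRingEnd ℂ) (Fi f i w) = Fi f i w := Complex.conj_ofReal _

lemma conj_Ecf (ρ : ℂ → ℝ) (w : ℂ) :
    (starRingEnd ℂ) (Ecf ρ w) = Ecf ρ w := Complex.conj_ofReal _

lemma contDiff_Ecf {ρ : ℂ → ℝ} (hρ : ContDiff ℝ (⊤ : ℕ∞) ρ) : ContDiff ℝ (⊤ : ℕ∞) (Ecf ρ) :=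
  Wirt.contDiff_expC hρ

lemma contDiff_dZ {ρ : ℂ → ℝ} (hρ : ContDiff ℝ (⊤ : ℕ∞) ρ) : ContDiff ℝ (⊤ : ℕ∞) (dZ ρ) :=
  Wirt.contDiff_wirtZ (Wirt.contDiff_ofReal_comp hρ)

lemma wirtZ_Ecf {ρ : ℂ → ℝ} (hρ : ContDiff ℝ (⊤ : ℕ∞) ρ) (w : ℂ) :
    wirtZ (Ecf ρ) w = 2 * dZ ρ w * Ecf ρ w :=
  Wirt.wirtZ_expC ((hρ.differentiable (by simp)) w)

lemma wirtZbar_Ecf {ρ : ℂ → ℝ} (hρ : ContDiff ℝ (⊤ : ℕ∞) ρ) (w : ℂ) :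
    wirtZbar (Ecf ρ) w = 2 * (starRingEnd ℂ) (dZ ρ w) * Ecf ρ w := by
  have hd : DifferentiableAt ℝ ρ w := (hρ.differentiable (by simp)) w
  have h1 := Wirt.wirtZbar_expC hd
  have h2 := Wirt.wirtZbar_ofReal hd
  calc wirtZbar (Ecf ρ) w = 2 * wirtZbar (fun u => ((ρ u : ℝ) : ℂ)) w * Ecf ρ w := h1
  _ = 2 * (starRingEnd ℂ) (dZ ρ w) * Ecf ρ w := by rw [h2]; rfl

lemma stepA {f : ℂ → Fin m → ℝ} (hf1 : ContDiff ℝ (⊤ : ℕ∞) f)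
    (hfs : ∀ z, ∑ i, (f z i) ^ 2 = 1) (w : ℂ) :
    ∑ i, wirtZ (Fi f i) w * Fi f i w = 0 := by
  have hd : ∀ i : Fin m, DifferentiableAt ℝ (Fi f i) w := fun i =>
    ((contDiff_Fi hf1 i).differentiable (by simp)) w
  have hconst : (fun u => ∑ i, Fi f i u * Fi f i u) = fun _ => (1 : ℂ) := by
    funext u
    have h1 : ((∑ i, (f u i) ^ 2 : ℝ) : ℂ) = 1 := by rw [hfs u]; norm_num
    rw [← h1]
    push_cast
    exact Finset.sum_congr rfl fun i _ => by rw [pow_two]; rfl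
  have h0 : wirtZ (fun u => ∑ i, Fi f i u * Fi f i u) w = 0 := by
    rw [hconst]; exact Wirt.wirtZ_const 1 w
  rw [Wirt.wirtZ_sum Finset.univ (G := fun i u => Fi f i u * Fi f i u)
    (fun i _ => (hd i).mul (hd i))] at h0
  have h2 : ∀ i ∈ (Finset.univ : Finset (Fin m)),
      wirtZ (fun u => Fi f i u * Fi f i u) w = 2 * (wirtZ (Fi f i) w * Fi f i w) := by
    intro i _
    rw [Wirt.wirtZ_mul (hd i) (hd i)]; ring
  rw [Finset.sum_congr rfl h2, ← Finset.mul_sum] at h0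
  rcases mul_eq_zero.mp h0 with h | h
  · norm_num at h
  · exact h

end GaussAux

namespace GaussAux

lemma star_eq {f : ℂ → Fin m → ℝ} {ρ : ℂ → ℝ} (hf : IsConfMinImm f ρ) (w : ℂ) :
    ∑ i, wirtZ (wirtZ (Fi f i)) w * (starRingEnd ℂ) (wirtZ (Fi f i) w)
      = dZ ρ w * Ecf ρ w := by
  obtain ⟨hf1, hρ, hfs, h4, h5, h6⟩ := hf
  have hd1 : ∀ i, Differentiable ℝ (wirtZ (Fi f i)) := fun i =>
    (Wirt.contDiff_wirtZ (contDiff_Fi hf1 i)).differentiable (by simp)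
  have hdconj : ∀ i, Differentiable ℝ (fun u => (starRingEnd ℂ) (wirtZ (Fi f i) u)) :=
    fun i u => ((hd1 i) u).star
  have h6' : ∀ z i, wirtZbar (wirtZ (Fi f i)) z = -(1 / 2 : ℂ) * Ecf ρ z * Fi f i z :=
    fun z i => h6 z i
  have h5' : (fun u => ∑ i, wirtZ (Fi f i) u * (starRingEnd ℂ) (wirtZ (Fi f i) u))
      = fun u => (1 / 2 : ℂ) * Ecf ρ u := by
    funext u; exact h5 u
  have key := congrFun (congrArg wirtZ h5') w
  rw [Wirt.wirtZ_sum Finset.univ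
    (G := fun i u => wirtZ (Fi f i) u * (starRingEnd ℂ) (wirtZ (Fi f i) u))
    (fun i _ => ((hd1 i) w).mul ((hdconj i) w))] at key
  have h2 : ∀ i ∈ (Finset.univ : Finset (Fin m)),
      wirtZ (fun u => wirtZ (Fi f i) u * (starRingEnd ℂ) (wirtZ (Fi f i) u)) w
        = wirtZ (wirtZ (Fi f i)) w * (starRingEnd ℂ) (wirtZ (Fi f i) w)
          + (-(1 / 2 : ℂ) * Ecf ρ w) * (wirtZ (Fi f i) w * Fi f i w) := by
    intro i _
    rw [Wirt.wirtZ_mul ((hd1 i) w) ((hdconj i) w), Wirt.wirtZ_conj, h6' w i]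
    simp only [map_mul, map_neg, map_div₀, map_one, map_ofNat, conj_Ecf, conj_Fi]
    ring
  rw [Finset.sum_congr rfl h2, Finset.sum_add_distrib, ← Finset.mul_sum,
    stepA hf1 hfs w, mul_zero, add_zero,
    Wirt.wirtZ_const_mul _ ((contDiff_Ecf hρ).differentiable (by simp) w),
    wirtZ_Ecf hρ w] at key
  rw [key]; ring

lemma s6_eq {f : ℂ → Fin m → ℝ} (hf1 : ContDiff ℝ (⊤ : ℕ∞) f)
    (hfs : ∀ z, ∑ i, (f z i) ^ 2 = 1) (z : ℂ) :
    ∑ i, Fi f i z * (starRingEnd ℂ) (wirtZ (Fi f i) z) = 0 := by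
  have h := congrArg (starRingEnd ℂ) (stepA hf1 hfs z)
  simp only [map_sum, map_mul, map_zero, conj_Fi] at h
  rw [← h]
  exact Finset.sum_congr rfl fun i _ => mul_comm _ _

lemma K6 {f : ℂ → Fin m → ℝ} {ρ : ℂ → ℝ} (hf : IsConfMinImm f ρ) (z : ℂ) :
    ∑ i, wirtZ (wirtZ (Fi f i)) z * (starRingEnd ℂ) (wirtZ (wirtZ (Fi f i)) z)
      = (1 / 4 : ℂ) * (Ecf ρ z * Ecf ρ z)
        + (wirtZbar (dZ ρ) z + 2 * dZ ρ z * (starRingEnd ℂ) (dZ ρ z)) * Ecf ρ z := by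
  obtain ⟨hf1, hρ, hfs, h4, h5, h6⟩ := hf
  have hd1 : ∀ i, Differentiable ℝ (wirtZ (Fi f i)) := fun i =>
    (Wirt.contDiff_wirtZ (contDiff_Fi hf1 i)).differentiable (by simp)
  have hd2 : ∀ i, Differentiable ℝ (wirtZ (wirtZ (Fi f i))) := fun i =>
    (Wirt.contDiff_wirtZ (Wirt.contDiff_wirtZ (contDiff_Fi hf1 i))).differentiable (by simp)
  have hdconj : ∀ i, Differentiable ℝ (fun u => (starRingEnd ℂ) (wirtZ (Fi f i) u)) :=
    fun i u => ((hd1 i) u).star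
  have hdE : Differentiable ℝ (Ecf ρ) := (contDiff_Ecf hρ).differentiable (by simp)
  have hddZ : Differentiable ℝ (dZ ρ) := (contDiff_dZ hρ).differentiable (by simp)
  have hdFi : ∀ i, Differentiable ℝ (Fi f i) := fun i =>
    (contDiff_Fi hf1 i).differentiable (by simp)
  have h6' : ∀ i, wirtZbar (wirtZ (Fi f i)) = fun u => -(1 / 2 : ℂ) * Ecf ρ u * Fi f i u :=
    fun i => funext fun u => h6 u i
  have h5' : ∑ i, wirtZ (Fi f i) z * (starRingEnd ℂ) (wirtZ (Fi f i) z)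
      = (1 / 2 : ℂ) * Ecf ρ z := h5 z
  have hstar : (fun w => ∑ i, wirtZ (wirtZ (Fi f i)) w * (starRingEnd ℂ) (wirtZ (Fi f i) w))
      = fun w => dZ ρ w * Ecf ρ w :=
    funext (star_eq ⟨hf1, hρ, hfs, h4, h5, h6⟩)
  have key := congrFun (congrArg wirtZbar hstar) z
  rw [Wirt.wirtZbar_sum Finset.univ
    (G := fun i u => wirtZ (wirtZ (Fi f i)) u * (starRingEnd ℂ) (wirtZ (Fi f i) u))
    (fun i _ => ((hd2 i) z).mul ((hdconj i) z))] at key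
  have h2 : ∀ i ∈ (Finset.univ : Finset (Fin m)),
      wirtZbar (fun u => wirtZ (wirtZ (Fi f i)) u * (starRingEnd ℂ) (wirtZ (Fi f i) u)) z
        = (-(dZ ρ z * Ecf ρ z)) * (Fi f i z * (starRingEnd ℂ) (wirtZ (Fi f i) z))
          + (-(1 / 2 : ℂ) * Ecf ρ z) * (wirtZ (Fi f i) z * (starRingEnd ℂ) (wirtZ (Fi f i) z))
          + wirtZ (wirtZ (Fi f i)) z * (starRingEnd ℂ) (wirtZ (wirtZ (Fi f i)) z) := by
    intro i _
    rw [Wirt.wirtZbar_mul ((hd2 i) z) ((hdconj i) z), Wirt.wirtZbar_conj,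
      Wirt.wirt_comm (Wirt.contDiff_wirtZ (contDiff_Fi hf1 i)) z, h6' i]
    have e1 : wirtZ (fun u => -(1 / 2 : ℂ) * Ecf ρ u * Fi f i u) z
        = (-(1 / 2 : ℂ) * wirtZ (Ecf ρ) z) * Fi f i z
          + (-(1 / 2 : ℂ) * Ecf ρ z) * wirtZ (Fi f i) z := by
      rw [Wirt.wirtZ_mul ((hdE z).const_mul _) (hdFi i z),
        Wirt.wirtZ_const_mul _ (hdE z)]
    rw [e1, wirtZ_Ecf hρ z]
    ring
  rw [Finset.sum_congr rfl h2, Finset.sum_add_distrib, Finset.sum_add_distrib,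
    ← Finset.mul_sum, ← Finset.mul_sum, s6_eq hf1 hfs z, h5',
    Wirt.wirtZbar_mul (hddZ z) (hdE z), wirtZbar_Ecf hρ z] at key
  linear_combination key

end GaussAux

/-- the Gauss equation in conformal coordinates,
`4 ρ_{z z̄} = 4 e^{−2ρ} ⟨Ω, Ω̄⟩ − e^{2ρ}`. -/
theorem gauss_equation (n : ℕ) (hn : 3 ≤ n)
    (f : ℂ → Fin (n + 1) → ℝ) (ρ : ℂ → ℝ) (hf : IsConfMinImm f ρ) :
    ∀ z : ℂ, 4 * wirtZbar (dZ ρ) z =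
      4 * (Real.exp (-2 * ρ z) : ℂ) * pairC (Hopf f ρ z) (conjV (Hopf f ρ z))
        - (Real.exp (2 * ρ z) : ℂ) := by
  intro z
  have hq := GaussAux.K6 hf z
  have hstar := GaussAux.star_eq hf z
  obtain ⟨hf1, hρ, hfs, h4, h5, h6⟩ := hf
  have h5' : ∑ i, wirtZ (GaussAux.Fi f i) z * (starRingEnd ℂ) (wirtZ (GaussAux.Fi f i) z)
      = (1 / 2 : ℂ) * GaussAux.Ecf ρ z := h5 z
  have hstar' : ∑ i, wirtZ (GaussAux.Fi f i) z
        * (starRingEnd ℂ) (wirtZ (wirtZ (GaussAux.Fi f i)) z)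
      = (starRingEnd ℂ) (dZ ρ z) * GaussAux.Ecf ρ z := by
    have h := congrArg (starRingEnd ℂ) hstar
    simp only [map_sum, map_mul, Complex.conj_conj, GaussAux.conj_Ecf] at h
    rw [← h]
    exact Finset.sum_congr rfl fun i _ => mul_comm _ _
  have expand : pairC (Hopf f ρ z) (conjV (Hopf f ρ z))
      = ∑ i, (wirtZ (wirtZ (GaussAux.Fi f i)) z - 2 * dZ ρ z * wirtZ (GaussAux.Fi f i) z)
          * (starRingEnd ℂ) (wirtZ (wirtZ (GaussAux.Fi f i)) z
            - 2 * dZ ρ z * wirtZ (GaussAux.Fi f i) z) := rfl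
  have per : ∀ i ∈ (Finset.univ : Finset (Fin (n + 1))),
      (wirtZ (wirtZ (GaussAux.Fi f i)) z - 2 * dZ ρ z * wirtZ (GaussAux.Fi f i) z)
          * (starRingEnd ℂ) (wirtZ (wirtZ (GaussAux.Fi f i)) z
            - 2 * dZ ρ z * wirtZ (GaussAux.Fi f i) z)
        = wirtZ (wirtZ (GaussAux.Fi f i)) z
              * (starRingEnd ℂ) (wirtZ (wirtZ (GaussAux.Fi f i)) z)
          - (2 * (starRingEnd ℂ) (dZ ρ z))
              * (wirtZ (wirtZ (GaussAux.Fi f i)) z * (starRingEnd ℂ) (wirtZ (GaussAux.Fi f i) z))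
          - (2 * dZ ρ z)
              * (wirtZ (GaussAux.Fi f i) z * (starRingEnd ℂ) (wirtZ (wirtZ (GaussAux.Fi f i)) z))
          + (4 * (dZ ρ z * (starRingEnd ℂ) (dZ ρ z)))
              * (wirtZ (GaussAux.Fi f i) z * (starRingEnd ℂ) (wirtZ (GaussAux.Fi f i) z)) := by
    intro i _
    simp only [map_sub, map_mul, map_ofNat]
    ring
  have hneg : ((Real.exp (-2 * ρ z) : ℝ) : ℂ) = (GaussAux.Ecf ρ z)⁻¹ := by
    rw [show (-2 : ℝ) * ρ z = -(2 * ρ z) by ring, Real.exp_neg, Complex.ofReal_inv]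
    rfl
  have hE0 : GaussAux.Ecf ρ z ≠ 0 :=
    Complex.ofReal_ne_zero.mpr (Real.exp_ne_zero _)
  rw [show ((Real.exp (2 * ρ z) : ℝ) : ℂ) = GaussAux.Ecf ρ z from rfl, hneg, expand,
    Finset.sum_congr rfl per]
  simp only [Finset.sum_add_distrib, Finset.sum_sub_distrib, ← Finset.mul_sum]
  rw [hstar, hstar', h5', hq]
  field_simp
  ring
end
end

section
/- Derivative formula for the normal projection of a constant vector: for every constant vector E ∈ ℝ^{n+1}, the normal projection E^⊥ of a conformal minimal immersion f : ℂ → S^n satisfies ∂_z (E^⊥) = −2 e^{−2ρ} ⟨E, Ω⟩ f_{z̄} − 2 e^{−2ρ} ⟨E, f_{z̄}⟩ Ω pointwise on ℂ. -/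
open Complex

noncomputable section

/-- The real-linear map `v ↦ p v + q v̄`. -/
def Lpq (p q : ℂ) : ℂ →L[ℝ] ℂ :=
  p • ContinuousLinearMap.id ℝ ℂ + q • (Complex.conjCLE : ℂ ≃L[ℝ] ℂ).toContinuousLinearMap

lemma Lpq_apply (p q v : ℂ) : Lpq p q v = p * v + q * (starRingEnd ℂ) v := by
  simp [Lpq, Complex.conjCLE_apply, smul_eq_mul]

lemma clm_ext_basis {T S : ℂ →L[ℝ] ℂ} (h1 : T 1 = S 1) (hI : T Complex.I = S Complex.I) :
    T = S := by
  ext v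
  have hv : v = v.re • (1 : ℂ) + v.im • Complex.I := by
    simp [Complex.real_smul]
  rw [hv, map_add, map_add, map_smul, map_smul, map_smul, map_smul, h1, hI]

def HasW (g : ℂ → ℂ) (p q : ℂ) (z : ℂ) : Prop := HasFDerivAt g (Lpq p q) z

lemma HasW.wirtZ {g : ℂ → ℂ} {p q z : ℂ} (h : HasW g p q z) : wirtZ g z = p := by
  have := h.fderiv
  rw [_root_.wirtZ, this, Lpq_apply, Lpq_apply]
  simp [Complex.conj_I]
  linear_combination ((q - p) / 2) * Complex.I_sq

lemma HasW.wirtZbar {g : ℂ → ℂ} {p q z : ℂ} (h : HasW g p q z) : wirtZbar g z = q := by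
  have := h.fderiv
  rw [_root_.wirtZbar, this, Lpq_apply, Lpq_apply]
  simp [Complex.conj_I]
  linear_combination ((p - q) / 2) * Complex.I_sq

lemma HasFDerivAt.hasW {g : ℂ → ℂ} {T : ℂ →L[ℝ] ℂ} {z : ℂ} (h : HasFDerivAt g T z) :
    HasW g ((1/2 : ℂ) * (T 1 - Complex.I * T Complex.I))
      ((1/2 : ℂ) * (T 1 + Complex.I * T Complex.I)) z := by
  have : Lpq ((1/2 : ℂ) * (T 1 - Complex.I * T Complex.I))
      ((1/2 : ℂ) * (T 1 + Complex.I * T Complex.I)) = T := by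
    apply clm_ext_basis
    · rw [Lpq_apply]; simp [Complex.conj_I]
      ring
    · rw [Lpq_apply]; simp [Complex.conj_I]
      linear_combination (-(T Complex.I)) * Complex.I_sq
  rw [HasW, this]; exact h

lemma DifferentiableAt.hasW {g : ℂ → ℂ} {z : ℂ} (h : DifferentiableAt ℝ g z) :
    HasW g (wirtZ g z) (wirtZbar g z) z :=
  h.hasFDerivAt.hasW

lemma HasW.const (c z : ℂ) : HasW (fun _ => c) 0 0 z := by
  rw [HasW]
  have : Lpq 0 0 = 0 := by apply clm_ext_basis <;> simp [Lpq_apply]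
  rw [this]; exact hasFDerivAt_const c z

lemma HasW.add {g h : ℂ → ℂ} {p₁ q₁ p₂ q₂ z : ℂ} (hg : HasW g p₁ q₁ z) (hh : HasW h p₂ q₂ z) :
    HasW (fun w => g w + h w) (p₁ + p₂) (q₁ + q₂) z := by
  have := HasFDerivAt.add hg hh
  have e : Lpq p₁ q₁ + Lpq p₂ q₂ = Lpq (p₁ + p₂) (q₁ + q₂) := by
    apply clm_ext_basis <;> · simp [Lpq_apply]; ring
  rw [HasW, ← e]; exact this

lemma HasW.sub {g h : ℂ → ℂ} {p₁ q₁ p₂ q₂ z : ℂ} (hg : HasW g p₁ q₁ z) (hh : HasW h p₂ q₂ z) :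
    HasW (fun w => g w - h w) (p₁ - p₂) (q₁ - q₂) z := by
  have := HasFDerivAt.sub hg hh
  have e : Lpq p₁ q₁ - Lpq p₂ q₂ = Lpq (p₁ - p₂) (q₁ - q₂) := by
    apply clm_ext_basis <;> · simp [Lpq_apply]; ring
  rw [HasW, ← e]; exact this

lemma HasW.mul {g h : ℂ → ℂ} {p₁ q₁ p₂ q₂ z : ℂ} (hg : HasW g p₁ q₁ z) (hh : HasW h p₂ q₂ z) :
    HasW (fun w => g w * h w) (g z * p₂ + h z * p₁) (g z * q₂ + h z * q₁) z := by
  have := HasFDerivAt.mul' hg hh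
  have e : g z • Lpq p₂ q₂ + (Lpq p₁ q₁).smulRight (h z)
      = Lpq (g z * p₂ + h z * p₁) (g z * q₂ + h z * q₁) := by
    apply clm_ext_basis <;>
      · simp [Lpq_apply, ContinuousLinearMap.smulRight_apply, smul_eq_mul, Complex.conj_I]
        ring
  rw [HasW, ← e]; exact this

lemma HasW.const_mul {g : ℂ → ℂ} {p q z : ℂ} (hg : HasW g p q z) (c : ℂ) :
    HasW (fun w => c * g w) (c * p) (c * q) z := by
  have := (HasW.const c z).mul hg
  simpa using this

lemma HasW.sum {ι : Type*} {s : Finset ι} {g : ι → ℂ → ℂ} {p q : ι → ℂ} {z : ℂ}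
    (h : ∀ i ∈ s, HasW (g i) (p i) (q i) z) :
    HasW (fun w => ∑ i ∈ s, g i w) (∑ i ∈ s, p i) (∑ i ∈ s, q i) z := by
  have := HasFDerivAt.fun_sum (A := g) (A' := fun i => Lpq (p i) (q i)) h
  have e : (∑ i ∈ s, Lpq (p i) (q i)) = Lpq (∑ i ∈ s, p i) (∑ i ∈ s, q i) := by
    apply clm_ext_basis <;>
      · simp [Lpq_apply, ContinuousLinearMap.sum_apply, Finset.sum_mul,
          Finset.sum_add_distrib, Finset.sum_neg_distrib]
  rw [HasW, ← e]; exact this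

lemma ContDiff.wirtZfun {g : ℂ → ℂ} (hg : ContDiff ℝ (⊤ : ℕ∞) g) :
    ContDiff ℝ (⊤ : ℕ∞) (fun z => wirtZ g z) := by
  have hD : ContDiff ℝ (⊤ : ℕ∞) (fderiv ℝ g) := hg.fderiv_right (by exact_mod_cast le_top)
  unfold wirtZ
  exact contDiff_const.mul ((hD.clm_apply contDiff_const).sub
    (contDiff_const.mul (hD.clm_apply contDiff_const)))

lemma ContDiff.wirtZbarfun {g : ℂ → ℂ} (hg : ContDiff ℝ (⊤ : ℕ∞) g) :
    ContDiff ℝ (⊤ : ℕ∞) (fun z => wirtZbar g z) := by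
  have hD : ContDiff ℝ (⊤ : ℕ∞) (fderiv ℝ g) := hg.fderiv_right (by exact_mod_cast le_top)
  unfold wirtZbar
  exact contDiff_const.mul ((hD.clm_apply contDiff_const).add
    (contDiff_const.mul (hD.clm_apply contDiff_const)))

lemma wirt_comm {g : ℂ → ℂ} (hg : ContDiff ℝ (⊤ : ℕ∞) g) (z : ℂ) :
    wirtZ (fun w => wirtZbar g w) z = wirtZbar (fun w => wirtZ g w) z := by
  have hD2 : ContDiff ℝ (⊤ : ℕ∞) (fderiv ℝ g) := hg.fderiv_right (by exact_mod_cast le_top)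
  have hDd : DifferentiableAt ℝ (fderiv ℝ g) z := (hD2.differentiable (by simp)).differentiableAt
  have hA : ∀ v : ℂ, DifferentiableAt ℝ (fun w => fderiv ℝ g w v) z :=
    fun v => hDd.clm_apply (differentiableAt_const v)
  have hfd : ∀ v u : ℂ, fderiv ℝ (fun w => fderiv ℝ g w v) z u = fderiv ℝ (fderiv ℝ g) z u v := by
    intro v u
    rw [fderiv_clm_apply hDd (differentiableAt_const v)]
    simp
  have hsymm := (hg.contDiffAt (x := z)).isSymmSndFDerivAt (by rw [minSmoothness_of_isRCLikeNormedField]; exact WithTop.coe_le_coe.mpr (le_top : (2 : ℕ∞) ≤ ⊤))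
  have eL : wirtZ (fun w => wirtZbar g w) z =
      (1/2 : ℂ) * (wirtZ (fun w => fderiv ℝ g w 1) z
        + Complex.I * wirtZ (fun w => fderiv ℝ g w Complex.I) z) :=
    (((hA 1).hasW.add (((hA Complex.I).hasW).const_mul Complex.I)).const_mul (1/2 : ℂ)).wirtZ
  have eR : wirtZbar (fun w => wirtZ g w) z =
      (1/2 : ℂ) * (wirtZbar (fun w => fderiv ℝ g w 1) z
        - Complex.I * wirtZbar (fun w => fderiv ℝ g w Complex.I) z) :=
    (((hA 1).hasW.sub (((hA Complex.I).hasW).const_mul Complex.I)).const_mul (1/2 : ℂ)).wirtZbar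
  rw [eL, eR]
  unfold wirtZ wirtZbar
  rw [hfd 1 1, hfd 1 Complex.I, hfd Complex.I 1, hfd Complex.I Complex.I,
    hsymm.eq 1 Complex.I]
  ring

lemma HasW.congr_p {g : ℂ → ℂ} {p q z p' : ℂ} (h : HasW g p q z) (e : p = p') :
    HasW g p' q z := e ▸ h

lemma HasFDerivAt.hasW_ofReal {h : ℂ → ℝ} {L : ℂ →L[ℝ] ℝ} {z : ℂ} (hh : HasFDerivAt h L z) :
    HasW (fun w => ((h w : ℝ) : ℂ))
      ((1/2 : ℂ) * ((L 1 : ℂ) - Complex.I * (L Complex.I : ℂ)))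
      ((1/2 : ℂ) * ((L 1 : ℂ) + Complex.I * (L Complex.I : ℂ))) z := by
  have h2 := (Complex.ofRealCLM.hasFDerivAt.comp z hh).hasW
  simpa [Function.comp_def] using h2

lemma dZ_eq {ρ : ℂ → ℝ} {z : ℂ} (hρ : DifferentiableAt ℝ ρ z) :
    dZ ρ z = (1/2 : ℂ) * ((fderiv ℝ ρ z 1 : ℂ) - Complex.I * (fderiv ℝ ρ z Complex.I : ℂ)) :=
  hρ.hasFDerivAt.hasW_ofReal.wirtZ

lemma hasW_expNeg {ρ : ℂ → ℝ} {z : ℂ} (hρ : DifferentiableAt ℝ ρ z) :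
    ∃ qe, HasW (fun w => ((Real.exp (-2 * ρ w) : ℝ) : ℂ))
      (-2 * dZ ρ z * ((Real.exp (-2 * ρ z) : ℝ) : ℂ)) qe z := by
  have hu : HasFDerivAt (fun w => -2 * ρ w) ((-2 : ℝ) • fderiv ℝ ρ z) z :=
    hρ.hasFDerivAt.const_mul (-2)
  have he := hu.exp
  have h2 := he.hasW_ofReal
  refine ⟨_, h2.congr_p ?_⟩
  rw [dZ_eq hρ]
  simp only [ContinuousLinearMap.smul_apply, smul_eq_mul]
  push_cast
  ring

/-- derivative formula for the normal projection of a constant vector,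
`∂_z (E^⊥) = −2 e^{−2ρ} ⟨E, Ω⟩ f_z̄ − 2 e^{−2ρ} ⟨E, f_z̄⟩ Ω`. -/
theorem eperp_derivative (n : ℕ) (hn : 3 ≤ n)
    (f : ℂ → Fin (n + 1) → ℝ) (ρ : ℂ → ℝ) (hf : IsConfMinImm f ρ)
    (E : Fin (n + 1) → ℝ) :
    ∀ (z : ℂ) (i : Fin (n + 1)), WZ (Eperp f ρ E) z i =
      -2 * (Real.exp (-2 * ρ z) : ℂ) * pairC (cV E) (Hopf f ρ z) * WZb (Fc f) z i
      - 2 * (Real.exp (-2 * ρ z) : ℂ) * pairC (cV E) (WZb (Fc f) z) * Hopf f ρ z i := by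
  obtain ⟨hfs, hρs, _, _, _, hmin⟩ := hf
  intro z i
  have hFs : ∀ j, ContDiff ℝ (⊤ : ℕ∞) (fun w => Fc f w j) := by
    intro j
    exact Complex.ofRealCLM.contDiff.comp ((contDiff_pi.mp hfs) j)
  have hφs : ∀ j, ContDiff ℝ (⊤ : ℕ∞) (fun w => WZ (Fc f) w j) := fun j => (hFs j).wirtZfun
  have hφbs : ∀ j, ContDiff ℝ (⊤ : ℕ∞) (fun w => WZb (Fc f) w j) := fun j => (hFs j).wirtZbarfun
  have hρd : DifferentiableAt ℝ ρ z := (hρs.differentiable (by simp)).differentiableAt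
  have hWF : ∀ j, HasW (fun w => Fc f w j) (WZ (Fc f) z j) (WZb (Fc f) z j) z := fun j =>
    (((hFs j).differentiable (by simp)).differentiableAt).hasW
  have hWφ : ∀ j, HasW (fun w => WZ (Fc f) w j)
      (Hopf f ρ z j + 2 * dZ ρ z * WZ (Fc f) z j)
      (wirtZbar (fun w => WZ (Fc f) w j) z) z := by
    intro j
    have h0 := (((hφs j).differentiable (by simp)).differentiableAt (x := z)).hasW
    refine h0.congr_p ?_
    show WZ (WZ (Fc f)) z j = _
    simp only [Hopf]
    ring
  have hWφb : ∀ j, HasW (fun w => WZb (Fc f) w j)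
      (-(1 / 2 : ℂ) * (Real.exp (2 * ρ z) : ℂ) * Fc f z j)
      (wirtZbar (fun w => WZb (Fc f) w j) z) z := by
    intro j
    have h0 := (((hφbs j).differentiable (by simp)).differentiableAt (x := z)).hasW
    refine h0.congr_p ?_
    calc wirtZ (fun w => WZb (Fc f) w j) z = WZb (WZ (Fc f)) z j := wirt_comm (hFs j) z
      _ = _ := hmin z j
  obtain ⟨qe, hWe⟩ := hasW_expNeg hρd
  have hWP : HasW (fun w => pairC (cV E) (Fc f w)) (pairC (cV E) (WZ (Fc f) z))
      (∑ j, cV E j * WZb (Fc f) z j) z :=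
    HasW.sum (s := Finset.univ) (fun j _ => (hWF j).const_mul (cV E j))
  have hWQ : HasW (fun w => pairC (cV E) (WZ (Fc f) w))
      (pairC (cV E) (Hopf f ρ z) + 2 * dZ ρ z * pairC (cV E) (WZ (Fc f) z))
      (∑ j, cV E j * wirtZbar (fun w => WZ (Fc f) w j) z) z := by
    refine (HasW.sum (s := Finset.univ) (fun j _ => (hWφ j).const_mul (cV E j))).congr_p ?_
    show (∑ j, cV E j * (Hopf f ρ z j + 2 * dZ ρ z * WZ (Fc f) z j))
      = (∑ j, cV E j * Hopf f ρ z j) + 2 * dZ ρ z * ∑ j, cV E j * WZ (Fc f) z j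
    rw [Finset.mul_sum, ← Finset.sum_add_distrib]
    exact Finset.sum_congr rfl fun j _ => by ring
  have hWR : HasW (fun w => pairC (cV E) (WZb (Fc f) w))
      (-(1 / 2 : ℂ) * (Real.exp (2 * ρ z) : ℂ) * pairC (cV E) (Fc f z))
      (∑ j, cV E j * wirtZbar (fun w => WZb (Fc f) w j) z) z := by
    refine (HasW.sum (s := Finset.univ) (fun j _ => (hWφb j).const_mul (cV E j))).congr_p ?_
    show (∑ j, cV E j * (-(1 / 2 : ℂ) * (Real.exp (2 * ρ z) : ℂ) * Fc f z j))
      = -(1 / 2 : ℂ) * (Real.exp (2 * ρ z) : ℂ) * ∑ j, cV E j * Fc f z j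
    rw [Finset.mul_sum]
    exact Finset.sum_congr rfl fun j _ => by ring
  have hBig := (((HasW.const ((E i : ℝ) : ℂ) z).sub (hWP.mul (hWF i))).sub
      (((hWe.const_mul 2).mul hWQ).mul (hWφb i))).sub
      (((hWe.const_mul 2).mul hWR).mul (hWφ i))
  refine (hBig.wirtZ).trans ?_
  have hE : ((Real.exp (-2 * ρ z) : ℝ) : ℂ) * ((Real.exp (2 * ρ z) : ℝ) : ℂ) = 1 := by
    rw [← Complex.ofReal_mul, ← Real.exp_add]
    norm_num
  linear_combination (pairC (cV E) (WZ (Fc f) z) * Fc f z i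
    + pairC (cV E) (Fc f z) * WZ (Fc f) z i) * hE
end
end

section
/- Linear independence of the normal projections of constant vectors (dimension count in Lemma 2.2): suppose the conformal minimal immersion f : ℂ → S^n is not totally geodesic, i.e. Ω(z₀) ≠ 0 for some z₀ ∈ ℂ. If E ∈ ℝ^{n+1} is a constant vector whose normal projection vanishes identically, E^⊥(z) = 0 for all z ∈ ℂ, then E = 0. Consequently the real span of the family of normal projections {E^⊥ : E ∈ ℝ^{n+1}} has dimension n + 1. -/
open Complex

noncomputable section

section WirtLemmas

variable {z : ℂ}

lemma wirtZ_contDiff {g : ℂ → ℂ} (hg : ContDiff ℝ (⊤ : ℕ∞) g) : ContDiff ℝ (⊤ : ℕ∞) (wirtZ g) := by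
  have h1 : ContDiff ℝ (⊤ : ℕ∞) (fderiv ℝ g) := hg.fderiv_right (by simp)
  exact contDiff_const.mul ((h1.clm_apply contDiff_const).sub
    (contDiff_const.mul (h1.clm_apply contDiff_const)))

lemma wirtZbar_contDiff {g : ℂ → ℂ} (hg : ContDiff ℝ (⊤ : ℕ∞) g) : ContDiff ℝ (⊤ : ℕ∞) (wirtZbar g) := by
  have h1 : ContDiff ℝ (⊤ : ℕ∞) (fderiv ℝ g) := hg.fderiv_right (by simp)
  exact contDiff_const.mul ((h1.clm_apply contDiff_const).add
    (contDiff_const.mul (h1.clm_apply contDiff_const)))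

lemma wirtZ_const (c : ℂ) : wirtZ (fun _ => c) z = 0 := by simp [wirtZ]

lemma wirtZ_mul {g h : ℂ → ℂ} (hg : DifferentiableAt ℝ g z) (hh : DifferentiableAt ℝ h z) :
    wirtZ (fun w => g w * h w) z = wirtZ g z * h z + g z * wirtZ h z := by
  unfold wirtZ
  rw [fderiv_fun_mul hg hh]
  simp only [ContinuousLinearMap.add_apply, ContinuousLinearMap.smul_apply, smul_eq_mul]
  ring

lemma wirtZ_const_mul {g : ℂ → ℂ} (c : ℂ) (hg : DifferentiableAt ℝ g z) :
    wirtZ (fun w => c * g w) z = c * wirtZ g z := by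
  unfold wirtZ
  rw [fderiv_const_mul hg]
  simp only [ContinuousLinearMap.smul_apply, smul_eq_mul]
  ring

lemma wirtZ_add {g h : ℂ → ℂ} (hg : DifferentiableAt ℝ g z) (hh : DifferentiableAt ℝ h z) :
    wirtZ (fun w => g w + h w) z = wirtZ g z + wirtZ h z := by
  unfold wirtZ
  rw [fderiv_fun_add hg hh]
  simp only [ContinuousLinearMap.add_apply]
  ring

lemma wirtZ_sum {ι : Type*} (s : Finset ι) (g : ι → ℂ → ℂ)
    (hg : ∀ i ∈ s, DifferentiableAt ℝ (g i) z) :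
    wirtZ (fun w => ∑ i ∈ s, g i w) z = ∑ i ∈ s, wirtZ (g i) z := by
  unfold wirtZ
  rw [fderiv_fun_sum hg]
  simp only [ContinuousLinearMap.coe_sum', Finset.sum_apply, Finset.mul_sum]
  rw [← Finset.sum_sub_distrib, ← Finset.mul_sum]

lemma fderiv_ofReal_comp {h : ℂ → ℝ} (hh : DifferentiableAt ℝ h z) (v : ℂ) :
    fderiv ℝ (fun w => ((h w : ℝ) : ℂ)) z v = ((fderiv ℝ h z v : ℝ) : ℂ) := by
  have := (Complex.ofRealCLM.hasFDerivAt.comp z hh.hasFDerivAt).fderiv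
  rw [show (fun w => ((h w : ℝ) : ℂ)) = (⇑Complex.ofRealCLM ∘ h) from rfl, this]
  rfl

lemma conj_wirtZ_real {h : ℂ → ℝ} (hh : DifferentiableAt ℝ h z) :
    (starRingEnd ℂ) (wirtZ (fun w => ((h w : ℝ) : ℂ)) z)
      = wirtZbar (fun w => ((h w : ℝ) : ℂ)) z := by
  unfold wirtZ wirtZbar
  rw [fderiv_ofReal_comp hh 1, fderiv_ofReal_comp hh Complex.I]
  simp only [map_mul, map_sub, map_div₀, map_one, map_ofNat, Complex.conj_ofReal,
    Complex.conj_I]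
  ring

lemma wirtZ_wirtZbar_comm {g : ℂ → ℂ} (hg : ContDiff ℝ (⊤ : ℕ∞) g) (z : ℂ) :
    wirtZ (wirtZbar g) z = wirtZbar (wirtZ g) z := by
  have hd : Differentiable ℝ g := hg.differentiable (by simp)
  have hd' : Differentiable ℝ (fderiv ℝ g) := (hg.fderiv_right (m := (⊤ : ℕ∞)) (by simp)).differentiable (by simp)
  have happ : ∀ v : ℂ, DifferentiableAt ℝ (fun w => fderiv ℝ g w v) z := fun v =>
    (hd'.differentiableAt).clm_apply (differentiableAt_const v)
  have hfd : ∀ v u : ℂ, fderiv ℝ (fun w => fderiv ℝ g w v) z u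
      = fderiv ℝ (fderiv ℝ g) z u v := by
    intro v u
    rw [fderiv_clm_apply hd'.differentiableAt (differentiableAt_const v)]
    simp
  have hsymm : ∀ v u : ℂ, fderiv ℝ (fderiv ℝ g) z u v = fderiv ℝ (fderiv ℝ g) z v u := by
    intro v u
    exact second_derivative_symmetric (fun y => (hd y).hasFDerivAt)
      (hd'.differentiableAt).hasFDerivAt u v
  have e1 : ∀ u : ℂ, fderiv ℝ (wirtZbar g) z u
      = (1/2 : ℂ) * (fderiv ℝ (fderiv ℝ g) z u 1
        + Complex.I * fderiv ℝ (fderiv ℝ g) z u Complex.I) := by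
    intro u
    have : wirtZbar g = fun w => (1/2 : ℂ) * ((fun w => fderiv ℝ g w 1) w
        + Complex.I * (fun w => fderiv ℝ g w Complex.I) w) := rfl
    rw [this, fderiv_const_mul (((happ 1)).fun_add ((happ Complex.I).const_mul _)),
      fderiv_fun_add (happ 1) ((happ Complex.I).const_mul _),
      fderiv_const_mul (happ Complex.I)]
    simp only [ContinuousLinearMap.smul_apply, ContinuousLinearMap.add_apply, smul_eq_mul]
    rw [hfd 1 u, hfd Complex.I u]
  have e2 : ∀ u : ℂ, fderiv ℝ (wirtZ g) z u
      = (1/2 : ℂ) * (fderiv ℝ (fderiv ℝ g) z u 1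
        - Complex.I * fderiv ℝ (fderiv ℝ g) z u Complex.I) := by
    intro u
    have : wirtZ g = fun w => (1/2 : ℂ) * ((fun w => fderiv ℝ g w 1) w
        - Complex.I * (fun w => fderiv ℝ g w Complex.I) w) := rfl
    rw [this, fderiv_const_mul (((happ 1)).fun_sub ((happ Complex.I).const_mul _)),
      fderiv_fun_sub (happ 1) ((happ Complex.I).const_mul _),
      fderiv_const_mul (happ Complex.I)]
    simp only [ContinuousLinearMap.smul_apply, ContinuousLinearMap.sub_apply, smul_eq_mul]
    rw [hfd 1 u, hfd Complex.I u]
  have q1 : wirtZ (wirtZbar g) z = (1/2:ℂ) * (fderiv ℝ (wirtZbar g) z 1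
      - Complex.I * fderiv ℝ (wirtZbar g) z Complex.I) := rfl
  have q2 : wirtZbar (wirtZ g) z = (1/2:ℂ) * (fderiv ℝ (wirtZ g) z 1
      + Complex.I * fderiv ℝ (wirtZ g) z Complex.I) := rfl
  rw [q1, q2, e1 1, e1 Complex.I, e2 1, e2 Complex.I, hsymm 1 Complex.I]
  ring

lemma wirtZ_exp_comp {ρ : ℂ → ℝ} (hρ : ContDiff ℝ (⊤ : ℕ∞) ρ) (r : ℝ) (z : ℂ) :
    wirtZ (fun w => ((Real.exp (r * ρ w) : ℝ) : ℂ)) z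
      = (r : ℂ) * dZ ρ z * (Real.exp (r * ρ z) : ℂ) := by
  have hρd : DifferentiableAt ℝ ρ z := (hρ.differentiable (by simp)).differentiableAt
  have hF : HasFDerivAt (fun w => Real.exp (r * ρ w))
      (Real.exp (r * ρ z) • (r • fderiv ℝ ρ z)) z := by
    have := (Real.hasDerivAt_exp (r * ρ z)).comp_hasFDerivAt z
      ((hρd.hasFDerivAt.const_smul r))
    simpa [smul_smul, Function.comp_def, Pi.smul_apply, smul_eq_mul] using this
  have hE : DifferentiableAt ℝ (fun w => Real.exp (r * ρ w)) z := hF.differentiableAt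
  unfold wirtZ dZ wirtZ
  rw [fderiv_ofReal_comp hE 1, fderiv_ofReal_comp hE Complex.I,
    fderiv_ofReal_comp hρd 1, fderiv_ofReal_comp hρd Complex.I, hF.fderiv]
  simp only [ContinuousLinearMap.smul_apply, smul_eq_mul]
  push_cast
  ring

lemma pairC_comm {m : ℕ} (u v : Fin m → ℂ) : pairC u v = pairC v u := by
  unfold pairC
  exact Finset.sum_congr rfl fun i _ => mul_comm _ _

lemma pairC_conj {m : ℕ} (u v : Fin m → ℂ) :
    (starRingEnd ℂ) (pairC u v) = pairC (conjV u) (conjV v) := by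
  unfold pairC conjV
  rw [map_sum]
  exact Finset.sum_congr rfl fun i _ => by rw [map_mul]

lemma wirtZ_pairC {m : ℕ} {u v : ℂ → Fin m → ℂ} {z : ℂ}
    (hu : ∀ i, DifferentiableAt ℝ (fun w => u w i) z)
    (hv : ∀ i, DifferentiableAt ℝ (fun w => v w i) z) :
    wirtZ (fun w => pairC (u w) (v w)) z = pairC (WZ u z) (v z) + pairC (u z) (WZ v z) := by
  have h0 : (fun w => pairC (u w) (v w)) = fun w => ∑ i, (fun w => u w i * v w i) w := rfl
  rw [h0, wirtZ_sum _ _ (fun i _ => ((hu i).fun_mul (hv i)))]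
  unfold pairC WZ
  rw [← Finset.sum_add_distrib]
  exact Finset.sum_congr rfl fun i _ => wirtZ_mul (hu i) (hv i)

end WirtLemmas

/-- Tangential coefficient `⟨E, f⟩`. -/
def cA {m : ℕ} (f : ℂ → Fin m → ℝ) (E : Fin m → ℝ) : ℂ → ℂ :=
  fun z => pairC (cV E) (Fc f z)

/-- Coefficient `2 e^{-2ρ} ⟨E, f_z⟩`. -/
def cB {m : ℕ} (f : ℂ → Fin m → ℝ) (ρ : ℂ → ℝ) (E : Fin m → ℝ) : ℂ → ℂ :=
  fun z => 2 * ((Real.exp (-2 * ρ z) : ℝ) : ℂ) * pairC (cV E) (WZ (Fc f) z)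

/-- Coefficient `2 e^{-2ρ} ⟨E, f_z̄⟩`. -/
def cC {m : ℕ} (f : ℂ → Fin m → ℝ) (ρ : ℂ → ℝ) (E : Fin m → ℝ) : ℂ → ℂ :=
  fun z => 2 * ((Real.exp (-2 * ρ z) : ℝ) : ℂ) * pairC (cV E) (WZb (Fc f) z)

lemma eperp_inj {m : ℕ} (f : ℂ → Fin m → ℝ) (ρ : ℂ → ℝ) (hf : IsConfMinImm f ρ)
    (z₀ : ℂ) (hΩ0 : Hopf f ρ z₀ ≠ 0) (E : Fin m → ℝ)
    (hE : ∀ z, Eperp f ρ E z = 0) : E = 0 := by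
  obtain ⟨hfC, hρC, hunit, hiso, hconf, hlap⟩ := hf
  -- smoothness of components
  have hFc : ∀ i, ContDiff ℝ (⊤ : ℕ∞) (fun w => Fc f w i) := fun i =>
    Complex.ofRealCLM.contDiff.comp ((contDiff_pi.mp hfC) i)
  have hFzc : ∀ i, ContDiff ℝ (⊤ : ℕ∞) (fun w => WZ (Fc f) w i) := fun i => wirtZ_contDiff (hFc i)
  have hFzbc : ∀ i, ContDiff ℝ (⊤ : ℕ∞) (fun w => WZb (Fc f) w i) := fun i => wirtZbar_contDiff (hFc i)
  have hFzzc : ∀ i, ContDiff ℝ (⊤ : ℕ∞) (fun w => WZ (WZ (Fc f)) w i) := fun i =>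
    wirtZ_contDiff (hFzc i)
  have dF : ∀ i z, DifferentiableAt ℝ (fun w => Fc f w i) z := fun i z =>
    ((hFc i).differentiable (by simp)).differentiableAt
  have dFz : ∀ i z, DifferentiableAt ℝ (fun w => WZ (Fc f) w i) z := fun i z =>
    ((hFzc i).differentiable (by simp)).differentiableAt
  have dFzb : ∀ i z, DifferentiableAt ℝ (fun w => WZb (Fc f) w i) z := fun i z =>
    ((hFzbc i).differentiable (by simp)).differentiableAt
  have hρCc : ContDiff ℝ (⊤ : ℕ∞) (fun w => ((ρ w : ℝ) : ℂ)) := Complex.ofRealCLM.contDiff.comp hρC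
  have hdZc : ContDiff ℝ (⊤ : ℕ∞) (dZ ρ) := wirtZ_contDiff hρCc
  have hexpN : ContDiff ℝ (⊤ : ℕ∞) (fun w => ((Real.exp (-2 * ρ w) : ℝ) : ℂ)) :=
    Complex.ofRealCLM.contDiff.comp (Real.contDiff_exp.comp (contDiff_const.mul hρC))
  have dExpN : ∀ z, DifferentiableAt ℝ (fun w => ((Real.exp (-2 * ρ w) : ℝ) : ℂ)) z := fun z =>
    (hexpN.differentiable (by simp)).differentiableAt
  -- conjugation relations
  have hconjF : ∀ z, conjV (Fc f z) = Fc f z := by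
    intro z; funext i; simp [conjV, Fc, cV, Complex.conj_ofReal]
  have hconjFz : ∀ z, conjV (WZ (Fc f) z) = WZb (Fc f) z := by
    intro z; funext i
    exact conj_wirtZ_real (((contDiff_pi.mp hfC) i).differentiable (by simp)).differentiableAt
  have hconjFzb : ∀ z, conjV (WZb (Fc f) z) = WZ (Fc f) z := by
    intro z; funext i
    have h1 := congrArg (starRingEnd ℂ) (congrFun (hconjFz z) i)
    simp only [conjV, RingHomCompTriple.comp_apply, Complex.conj_conj] at h1 ⊢
    rw [← h1]
    simp [conjV]
  have hconjE : conjV (cV E) = cV E := by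
    funext i; simp [conjV, cV, Complex.conj_ofReal]
  -- basic pairings
  have h0 : ∀ z, pairC (Fc f z) (Fc f z) = 1 := by
    intro z
    have h := hunit z
    have h2 : ((∑ i, (f z i) ^ 2 : ℝ) : ℂ) = 1 := by rw [h]; norm_num
    rw [← h2]
    unfold pairC Fc cV
    push_cast
    exact Finset.sum_congr rfl fun i _ => (sq (f z i : ℂ)).symm
  have hFf : ∀ z, pairC (WZ (Fc f) z) (Fc f z) = 0 := by
    intro z
    have h1 := wirtZ_pairC (u := Fc f) (v := Fc f) (z := z) (fun i => dF i z) (fun i => dF i z)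
    rw [show (fun w => pairC (Fc f w) (Fc f w)) = fun _ => (1:ℂ) from funext h0,
      wirtZ_const, pairC_comm (Fc f z) (WZ (Fc f) z)] at h1
    linear_combination -h1 / 2
  have hFzbf : ∀ z, pairC (WZb (Fc f) z) (Fc f z) = 0 := by
    intro z
    have h1 := pairC_conj (WZ (Fc f) z) (Fc f z)
    rw [hFf z, hconjFz z, hconjF z] at h1
    simpa using h1.symm
  have hFzzf : ∀ z, pairC (WZ (WZ (Fc f)) z) (Fc f z) = 0 := by
    intro z
    have h1 := wirtZ_pairC (u := WZ (Fc f)) (v := Fc f) (z := z)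
      (fun i => dFz i z) (fun i => dF i z)
    rw [show (fun w => pairC (WZ (Fc f) w) (Fc f w)) = fun _ => (0:ℂ) from funext hFf,
      wirtZ_const, hiso z] at h1
    linear_combination -h1
  have hFzzFz : ∀ z, pairC (WZ (WZ (Fc f)) z) (WZ (Fc f) z) = 0 := by
    intro z
    have h1 := wirtZ_pairC (u := WZ (Fc f)) (v := WZ (Fc f)) (z := z)
      (fun i => dFz i z) (fun i => dFz i z)
    rw [show (fun w => pairC (WZ (Fc f) w) (WZ (Fc f) w)) = fun _ => (0:ℂ) from funext hiso,
      wirtZ_const, pairC_comm (WZ (Fc f) z) (WZ (WZ (Fc f)) z)] at h1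
    linear_combination -h1 / 2
  -- mixed second derivative
  have hMix : ∀ z i, WZ (WZb (Fc f)) z i
      = -(1/2 : ℂ) * ((Real.exp (2 * ρ z) : ℝ) : ℂ) * Fc f z i := by
    intro z i
    have h1 : WZ (WZb (Fc f)) z i = wirtZ (wirtZbar (fun w => Fc f w i)) z := rfl
    rw [h1, wirtZ_wirtZbar_comm (hFc i) z]
    exact hlap z i
  have hMixPair : ∀ z (v : Fin m → ℂ), pairC (WZ (WZb (Fc f)) z) v
      = -(1/2 : ℂ) * ((Real.exp (2 * ρ z) : ℝ) : ℂ) * pairC (Fc f z) v := by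
    intro z v
    unfold pairC
    rw [Finset.mul_sum]
    exact Finset.sum_congr rfl fun i _ => by rw [hMix z i]; ring
  have hconf' : ∀ z, pairC (WZ (Fc f) z) (WZb (Fc f) z)
      = (1/2 : ℂ) * ((Real.exp (2 * ρ z) : ℝ) : ℂ) := by
    intro z
    have := hconf z
    rw [hconjFz z] at this
    simpa using this
  have hFzbFzb : ∀ z, pairC (WZb (Fc f) z) (WZb (Fc f) z) = 0 := by
    intro z
    have h1 := pairC_conj (WZ (Fc f) z) (WZ (Fc f) z)
    rw [hiso z, hconjFz z] at h1
    simpa using h1.symm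
  have hFzzFzb : ∀ z, pairC (WZ (WZ (Fc f)) z) (WZb (Fc f) z)
      = dZ ρ z * ((Real.exp (2 * ρ z) : ℝ) : ℂ) := by
    intro z
    have h1 := wirtZ_pairC (u := WZ (Fc f)) (v := WZb (Fc f)) (z := z)
      (fun i => dFz i z) (fun i => dFzb i z)
    rw [show (fun w => pairC (WZ (Fc f) w) (WZb (Fc f) w))
        = fun w => (1/2 : ℂ) * ((Real.exp (2 * ρ w) : ℝ) : ℂ) from funext hconf'] at h1
    rw [wirtZ_const_mul (1/2 : ℂ) (by
      exact ((Complex.ofRealCLM.contDiff.comp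
        (Real.contDiff_exp.comp (contDiff_const.mul hρC))).differentiable (by simp)).differentiableAt),
      wirtZ_exp_comp hρC 2 z] at h1
    have h2 := hMixPair z (WZ (Fc f) z)
    rw [pairC_comm (WZ (Fc f) z) (WZ (WZb (Fc f)) z), h2,
      pairC_comm (Fc f z) (WZ (Fc f) z), hFf z] at h1
    push_cast at h1 ⊢
    linear_combination -h1
  -- Hopf pairings
  have hHopfPair : ∀ z (v : Fin m → ℂ), pairC (Hopf f ρ z) v
      = pairC (WZ (WZ (Fc f)) z) v - 2 * dZ ρ z * pairC (WZ (Fc f) z) v := by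
    intro z v
    unfold pairC Hopf
    rw [Finset.mul_sum, ← Finset.sum_sub_distrib]
    exact Finset.sum_congr rfl fun i _ => by ring
  have hΩF : ∀ z, pairC (Hopf f ρ z) (Fc f z) = 0 := by
    intro z; rw [hHopfPair, hFzzf z, hFf z]; ring
  have hΩFz : ∀ z, pairC (Hopf f ρ z) (WZ (Fc f) z) = 0 := by
    intro z; rw [hHopfPair, hFzzFz z, hiso z]; ring
  have hΩFzb : ∀ z, pairC (Hopf f ρ z) (WZb (Fc f) z) = 0 := by
    intro z; rw [hHopfPair, hFzzFzb z, hconf' z]; ring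
  have hconjΩ : ∀ z, conjV (conjV (Hopf f ρ z)) = Hopf f ρ z := by
    intro z; funext i; simp [conjV]
  have hΩbF : ∀ z, pairC (Fc f z) (conjV (Hopf f ρ z)) = 0 := by
    intro z
    have h1 := pairC_conj (Hopf f ρ z) (Fc f z)
    rw [hΩF z, hconjF z, map_zero] at h1
    rw [pairC_comm, ← h1]
  have hΩbFz : ∀ z, pairC (WZ (Fc f) z) (conjV (Hopf f ρ z)) = 0 := by
    intro z
    have h1 := pairC_conj (Hopf f ρ z) (WZb (Fc f) z)
    rw [hΩFzb z, hconjFzb z, map_zero] at h1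
    rw [pairC_comm, ← h1]
  have hΩbFzb : ∀ z, pairC (WZb (Fc f) z) (conjV (Hopf f ρ z)) = 0 := by
    intro z
    have h1 := pairC_conj (Hopf f ρ z) (WZ (Fc f) z)
    rw [hΩFz z, hconjFz z, map_zero] at h1
    rw [pairC_comm, ← h1]
  have hΩbFzz : ∀ z, pairC (WZ (WZ (Fc f)) z) (conjV (Hopf f ρ z))
      = pairC (Hopf f ρ z) (conjV (Hopf f ρ z)) := by
    intro z
    have h1 := hHopfPair z (conjV (Hopf f ρ z))
    rw [hΩbFz z] at h1
    rw [h1]; ring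
  -- differentiability of coefficients
  have dA : ∀ z, DifferentiableAt ℝ (cA f E) z := by
    intro z
    have hr : cA f E = fun z => ∑ i, cV E i * Fc f z i := rfl
    rw [hr]
    exact DifferentiableAt.fun_sum fun i _ => (differentiableAt_const _).mul (dF i z)
  have dB : ∀ z, DifferentiableAt ℝ (cB f ρ E) z := by
    intro z
    have hr : cB f ρ E = fun z => (2 * ((Real.exp (-2 * ρ z) : ℝ) : ℂ))
        * ∑ i, cV E i * WZ (Fc f) z i := rfl
    rw [hr]
    exact ((differentiableAt_const (2:ℂ)).mul (dExpN z)).mul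
      (DifferentiableAt.fun_sum fun i _ => (differentiableAt_const _).mul (dFz i z))
  have dC : ∀ z, DifferentiableAt ℝ (cC f ρ E) z := by
    intro z
    have hr : cC f ρ E = fun z => (2 * ((Real.exp (-2 * ρ z) : ℝ) : ℂ))
        * ∑ i, cV E i * WZb (Fc f) z i := rfl
    rw [hr]
    exact ((differentiableAt_const (2:ℂ)).mul (dExpN z)).mul
      (DifferentiableAt.fun_sum fun i _ => (differentiableAt_const _).mul (dFzb i z))
  -- the identity E = a f + b f_z̄ + c f_z
  have hEid : ∀ z i, (E i : ℂ) = cA f E z * Fc f z i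
      + (cB f ρ E z * WZb (Fc f) z i + cC f ρ E z * WZ (Fc f) z i) := by
    intro z i
    have h1 := congrFun (hE z) i
    simp only [Eperp, Pi.zero_apply] at h1
    unfold cA cB cC
    linear_combination h1
  -- differentiate the identity
  have hDer : ∀ z i, (0:ℂ) = wirtZ (cA f E) z * Fc f z i + cA f E z * WZ (Fc f) z i
      + wirtZ (cB f ρ E) z * WZb (Fc f) z i + cB f ρ E z * WZ (WZb (Fc f)) z i
      + wirtZ (cC f ρ E) z * WZ (Fc f) z i + cC f ρ E z * WZ (WZ (Fc f)) z i := by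
    intro z i
    have hfun : (fun _ : ℂ => (E i : ℂ)) = fun w => cA f E w * Fc f w i
        + (cB f ρ E w * WZb (Fc f) w i + cC f ρ E w * WZ (Fc f) w i) :=
      funext fun w => hEid w i
    have h1 : (0:ℂ) = wirtZ (fun w => cA f E w * Fc f w i
        + (cB f ρ E w * WZb (Fc f) w i + cC f ρ E w * WZ (Fc f) w i)) z := by
      rw [← hfun, wirtZ_const]
    rw [wirtZ_add ((dA z).fun_mul (dF i z))
        (((dB z).fun_mul (dFzb i z)).fun_add ((dC z).fun_mul (dFz i z))),
      wirtZ_add ((dB z).fun_mul (dFzb i z)) ((dC z).fun_mul (dFz i z)),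
      wirtZ_mul (dA z) (dF i z), wirtZ_mul (dB z) (dFzb i z),
      wirtZ_mul (dC z) (dFz i z)] at h1
    rw [h1]
    simp only [WZ]
    ring
  -- pair the differentiated identity with arbitrary v
  have hPair : ∀ z (v : Fin m → ℂ), (0:ℂ)
      = wirtZ (cA f E) z * pairC (Fc f z) v + cA f E z * pairC (WZ (Fc f) z) v
      + wirtZ (cB f ρ E) z * pairC (WZb (Fc f) z) v
      + cB f ρ E z * pairC (WZ (WZb (Fc f)) z) v
      + wirtZ (cC f ρ E) z * pairC (WZ (Fc f) z) v
      + cC f ρ E z * pairC (WZ (WZ (Fc f)) z) v := by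
    intro z v
    have h1 : (0:ℂ) = ∑ i, (wirtZ (cA f E) z * Fc f z i + cA f E z * WZ (Fc f) z i
        + wirtZ (cB f ρ E) z * WZb (Fc f) z i + cB f ρ E z * WZ (WZb (Fc f)) z i
        + wirtZ (cC f ρ E) z * WZ (Fc f) z i + cC f ρ E z * WZ (WZ (Fc f)) z i) * v i :=
      (Finset.sum_eq_zero fun i _ => by rw [← hDer z i, zero_mul]).symm
    have h2 : wirtZ (cA f E) z * pairC (Fc f z) v + cA f E z * pairC (WZ (Fc f) z) v
        + wirtZ (cB f ρ E) z * pairC (WZb (Fc f) z) v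
        + cB f ρ E z * pairC (WZ (WZb (Fc f)) z) v
        + wirtZ (cC f ρ E) z * pairC (WZ (Fc f) z) v
        + cC f ρ E z * pairC (WZ (WZ (Fc f)) z) v
        = ∑ i, (wirtZ (cA f E) z * Fc f z i + cA f E z * WZ (Fc f) z i
        + wirtZ (cB f ρ E) z * WZb (Fc f) z i + cB f ρ E z * WZ (WZb (Fc f)) z i
        + wirtZ (cC f ρ E) z * WZ (Fc f) z i + cC f ρ E z * WZ (WZ (Fc f)) z i) * v i := by
      unfold pairC
      simp only [Finset.mul_sum, ← Finset.sum_add_distrib]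
      exact Finset.sum_congr rfl fun i _ => by ring
    rw [h2]
    exact h1
  -- equation 1 : c ⟨Ω, Ω̄⟩ = 0
  have hEq1 : ∀ z, cC f ρ E z * pairC (Hopf f ρ z) (conjV (Hopf f ρ z)) = 0 := by
    intro z
    have h1 := hPair z (conjV (Hopf f ρ z))
    rw [hΩbF z, hΩbFz z, hΩbFzb z, hMixPair z (conjV (Hopf f ρ z)), hΩbF z, hΩbFzz z] at h1
    linear_combination -h1
  -- equation 2 : a (1/2)e^{2ρ} + c_z (1/2)e^{2ρ} + c ρ_z e^{2ρ} = 0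
  have hEq2 : ∀ z, cA f E z * ((1/2 : ℂ) * ((Real.exp (2 * ρ z) : ℝ) : ℂ))
      + wirtZ (cC f ρ E) z * ((1/2 : ℂ) * ((Real.exp (2 * ρ z) : ℝ) : ℂ))
      + cC f ρ E z * (dZ ρ z * ((Real.exp (2 * ρ z) : ℝ) : ℂ)) = 0 := by
    intro z
    have h1 := hPair z (WZb (Fc f) z)
    rw [pairC_comm (Fc f z) (WZb (Fc f) z), hFzbf z, hconf' z, hFzbFzb z,
      hMixPair z (WZb (Fc f) z), pairC_comm (Fc f z) (WZb (Fc f) z), hFzbf z,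
      hFzzFzb z] at h1
    linear_combination -h1
  -- positivity of ⟨Ω, Ω̄⟩ at z₀
  have hPz0 : pairC (Hopf f ρ z₀) (conjV (Hopf f ρ z₀)) ≠ 0 := by
    have h1 : pairC (Hopf f ρ z₀) (conjV (Hopf f ρ z₀))
        = ((∑ i, Complex.normSq (Hopf f ρ z₀ i) : ℝ) : ℂ) := by
      unfold pairC conjV
      push_cast
      exact Finset.sum_congr rfl fun i _ => (Complex.mul_conj _)
    rw [h1, Complex.ofReal_ne_zero]
    obtain ⟨i, hi⟩ : ∃ i, Hopf f ρ z₀ i ≠ 0 := by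
      by_contra h
      push_neg at h
      exact hΩ0 (funext h)
    have h2 : 0 < ∑ i, Complex.normSq (Hopf f ρ z₀ i) :=
      Finset.sum_pos' (fun j _ => Complex.normSq_nonneg _)
        ⟨i, Finset.mem_univ i, Complex.normSq_pos.mpr hi⟩
    exact ne_of_gt h2
  -- continuity of ⟨Ω, Ω̄⟩
  have hHcont : ∀ i, Continuous (fun z => Hopf f ρ z i) := by
    intro i
    exact ((hFzzc i).continuous).sub
      ((continuous_const.mul hdZc.continuous).mul (hFzc i).continuous)
  have hPcont : Continuous (fun z => pairC (Hopf f ρ z) (conjV (Hopf f ρ z))) := by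
    unfold pairC conjV
    exact continuous_finset_sum _ fun i _ =>
      (hHcont i).mul (Complex.continuous_conj.comp (hHcont i))
  -- c vanishes near z₀
  have hCev : (fun w => cC f ρ E w) =ᶠ[nhds z₀] fun _ => (0:ℂ) := by
    have hPne : ∀ᶠ w in nhds z₀,
        pairC (Hopf f ρ w) (conjV (Hopf f ρ w)) ≠ 0 :=
      hPcont.continuousAt.eventually_ne hPz0
    exact hPne.mono fun w hw => (mul_eq_zero.mp (hEq1 w)).resolve_right hw
  have hC0 : cC f ρ E z₀ = 0 := hCev.eq_of_nhds
  have hCz0 : wirtZ (cC f ρ E) z₀ = 0 := by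
    unfold wirtZ
    rw [hCev.fderiv_eq]
    simp
  -- conclude
  have hexp2ne : ((Real.exp (2 * ρ z₀) : ℝ) : ℂ) ≠ 0 := by
    rw [Complex.ofReal_ne_zero]; exact Real.exp_ne_zero _
  have hA0 : cA f E z₀ = 0 := by
    have h1 := hEq2 z₀
    rw [hC0, hCz0] at h1
    have h2 : cA f E z₀ * ((1/2 : ℂ) * ((Real.exp (2 * ρ z₀) : ℝ) : ℂ)) = 0 := by
      linear_combination h1
    rcases mul_eq_zero.mp h2 with h | h
    · exact h
    · exact absurd h (by simp [hexp2ne])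
  have hCpair : pairC (cV E) (WZb (Fc f) z₀) = 0 := by
    have h1 : cC f ρ E z₀ = 2 * ((Real.exp (-2 * ρ z₀) : ℝ) : ℂ)
        * pairC (cV E) (WZb (Fc f) z₀) := rfl
    rw [h1] at hC0
    have hexpne : ((Real.exp (-2 * ρ z₀) : ℝ) : ℂ) ≠ 0 := by
      rw [Complex.ofReal_ne_zero]; exact Real.exp_ne_zero _
    rcases mul_eq_zero.mp hC0 with h | h
    · rcases mul_eq_zero.mp h with h' | h'
      · norm_num at h'
      · exact absurd h' hexpne
    · exact h
  have hBpair : pairC (cV E) (WZ (Fc f) z₀) = 0 := by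
    have h1 := pairC_conj (cV E) (WZb (Fc f) z₀)
    rw [hCpair, hconjE, hconjFzb z₀, map_zero] at h1
    exact h1.symm
  have hB0 : cB f ρ E z₀ = 0 := by
    have h1 : cB f ρ E z₀ = 2 * ((Real.exp (-2 * ρ z₀) : ℝ) : ℂ)
        * pairC (cV E) (WZ (Fc f) z₀) := rfl
    rw [h1, hBpair, mul_zero]
  funext i
  have h1 := hEid z₀ i
  rw [hA0, hB0, hC0] at h1
  simp only [zero_mul, add_zero, zero_add] at h1
  exact_mod_cast h1

/-- `E ↦ E^⊥` as a linear map. -/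
def EperpL {m : ℕ} (f : ℂ → Fin m → ℝ) (ρ : ℂ → ℝ) : (Fin m → ℝ) →ₗ[ℝ] (ℂ → Fin m → ℂ) where
  toFun E := Eperp f ρ E
  map_add' E E' := by
    funext z i
    have h : ∀ v : Fin m → ℂ, pairC (cV (E + E')) v = pairC (cV E) v + pairC (cV E') v := by
      intro v
      unfold pairC cV
      rw [← Finset.sum_add_distrib]
      refine Finset.sum_congr rfl fun j _ => ?_
      push_cast [Pi.add_apply]
      ring
    simp only [Eperp, Pi.add_apply, h]
    push_cast
    ring
  map_smul' r E := by
    funext z i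
    have h : ∀ v : Fin m → ℂ, pairC (cV (r • E)) v = (r : ℂ) * pairC (cV E) v := by
      intro v
      unfold pairC cV
      rw [Finset.mul_sum]
      refine Finset.sum_congr rfl fun j _ => ?_
      push_cast [Pi.smul_apply, smul_eq_mul]
      ring
    simp only [Eperp, Pi.smul_apply, RingHom.id_apply, h, smul_eq_mul, Complex.real_smul]
    push_cast
    ring


/-- if `f` is not totally geodesic then `E ↦ E^⊥` is injective, so the span
of the normal projections of constant vectors has dimension `n + 1`. -/
theorem eperp_linearly_independent (n : ℕ) (hn : 3 ≤ n)
    (f : ℂ → Fin (n + 1) → ℝ) (ρ : ℂ → ℝ) (hf : IsConfMinImm f ρ)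
    (hΩ : ∃ z₀ : ℂ, Hopf f ρ z₀ ≠ 0) :
    (∀ E : Fin (n + 1) → ℝ, (∀ z : ℂ, Eperp f ρ E z = 0) → E = 0) ∧
    Module.finrank ℝ
      ↥(Submodule.span ℝ (Set.range (fun E : Fin (n + 1) → ℝ => Eperp f ρ E))) = n + 1 := by
  obtain ⟨z₀, hz₀⟩ := hΩ
  have hinj : ∀ E : Fin (n + 1) → ℝ, (∀ z : ℂ, Eperp f ρ E z = 0) → E = 0 :=
    fun E hE => eperp_inj f ρ hf z₀ hz₀ E hE
  refine ⟨hinj, ?_⟩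
  have hinj' : Function.Injective (EperpL f ρ (m := n + 1)) := by
    rw [← LinearMap.ker_eq_bot, LinearMap.ker_eq_bot']
    intro E hEker
    exact hinj E fun z => congrFun hEker z
  have hr : (Set.range fun E : Fin (n + 1) → ℝ => Eperp f ρ E)
      = ↑(LinearMap.range (EperpL f ρ (m := n + 1))) := by
    rw [LinearMap.coe_range]
    rfl
  rw [hr, Submodule.span_eq, LinearMap.finrank_range_of_inj hinj',
    Module.finrank_fin_fun]
end
end
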